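/- The n-core of a partition λ — the partition obtained by repeatedly removing rim hooks of size n until none can be removed — is independent of the order/choice of removals. -/

import Mathlib

open MvPolynomial


theorem sorted_replicate_ge (m c : ℕ) : (List.replicate m c).Pairwise (· ≥ ·) := by
  induction m with
  | zero => simp
  | succ n ih =>
    rw [List.replicate_succ, List.pairwise_cons]
    exact ⟨fun b hb => (List.eq_of_mem_replicate hb).le, ih⟩

/-- `h_m` with integer index: zero for negative `m`. -/
noncomputable def hpoly (N : ℕ) (m : ℤ) : MvPolynomial (Fin N) ℚ :=
  if 0 ≤ m then hsymm (Fin N) ℚ m.toNat else 0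

/-- The Schur polynomial in `N` variables of a partition (Young diagram), via
the Jacobi–Trudi determinant `det (h_{λ_i + j - i})`. -/
noncomputable def schur (N : ℕ) (μ : YoungDiagram) : MvPolynomial (Fin N) ℚ :=
  Matrix.det (Matrix.of fun i j : Fin μ.rowLens.length =>
    hpoly N ((μ.rowLens.get i : ℤ) + (j : ℤ) - (i : ℤ)))

/-- The hook partition `(b, 1^(a-1))` (with `a` rows; intended for `a, b ≥ 1`). -/
def hookDiagram (a b : ℕ) : YoungDiagram :=
  YoungDiagram.ofRowLens (max b 1 :: List.replicate (a - 1) 1) (by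
    rw [List.sortedGE_iff_pairwise]
    simp only [List.pairwise_cons]
    refine ⟨fun x hx => ?_, sorted_replicate_ge ..⟩
    rw [List.eq_of_mem_replicate hx]
    omega)

/-- The cells of the skew shape `μ / λ`. -/
def skewCells (lam mu : YoungDiagram) : Finset (ℕ × ℕ) := mu.cells \ lam.cells

/-- Two boxes are (edgewise) adjacent. -/
def Adj (c d : ℕ × ℕ) : Prop :=
  (c.1 = d.1 ∧ (c.2 = d.2 + 1 ∨ d.2 = c.2 + 1)) ∨
  (c.2 = d.2 ∧ (c.1 = d.1 + 1 ∨ d.1 = c.1 + 1))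

/-- A set of boxes is edgewise connected. -/
def IsConnectedCells (s : Finset (ℕ × ℕ)) : Prop :=
  ∀ c ∈ s, ∀ d ∈ s, Relation.ReflTransGen (fun x y => x ∈ s ∧ y ∈ s ∧ Adj x y) c d

/-- A set of boxes contains no 2×2 square. -/
def NoSquare (s : Finset (ℕ × ℕ)) : Prop :=
  ¬∃ i j : ℕ, (i, j) ∈ s ∧ (i + 1, j) ∈ s ∧ (i, j + 1) ∈ s ∧ (i + 1, j + 1) ∈ s

/-- `μ / λ` is a rim hook (border strip): nonempty, connected, no 2×2 square. -/
def IsRimHook (lam mu : YoungDiagram) : Prop :=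
  lam ≤ mu ∧ (skewCells lam mu).Nonempty ∧ IsConnectedCells (skewCells lam mu) ∧
    NoSquare (skewCells lam mu)

/-- The number of boxes of the skew shape `μ / λ`. -/
def skewSize (lam mu : YoungDiagram) : ℕ := (skewCells lam mu).card

/-- The height (number of nonempty rows) of the skew shape `μ / λ`. -/
def skewHt (lam mu : YoungDiagram) : ℕ := ((skewCells lam mu).image Prod.fst).card

/-- The `k × (n-k)` rectangle partition `Box_{k,n}`. -/
def box (k n : ℕ) : YoungDiagram :=
  YoungDiagram.ofRowLens (List.replicate k (n - k)) (sorted_replicate_ge ..).sortedGE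

/-- The diagonal `j - i` of a box `(i, j)`. -/
def diagOf (c : ℕ × ℕ) : ℤ := (c.2 : ℤ) - (c.1 : ℤ)

/-- One step of `n`-core reduction: `μ` is obtained from `λ` by removing a rim hook
of size `n`. -/
def RemoveStep (n : ℕ) (lam mu : YoungDiagram) : Prop :=
  IsRimHook mu lam ∧ skewSize mu lam = n

/-!
Give a partition `λ` with at most `N` rows its beta-set `{λ_k + (N - 1 - k) : k < N}`. Removing
a rim hook of size `n` that occupies rows `i, …, j` replaces the beta-number of row `i` by the
beta-number of the new row `j`, which is `n` smaller and was not in the beta-set before;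
conversely, whenever `b` is in the beta-set and `b - n` is not, such a rim hook exists. So
removals preserve how many beta-numbers lie in each residue class mod `n`, and a partition from
which no rim hook of size `n` can be removed has a beta-set closed under `b ↦ b - n`. A set
closed under `b ↦ b - n` is determined by these residue counts, since its intersection with each
residue class is an initial segment of the class, and the beta-set determines the partition.
-/

open Finset Relation

namespace YoungDiagram

variable {μ ν : YoungDiagram}

theorem rowLen_mono (h : μ ≤ ν) (k : ℕ) : μ.rowLen k ≤ ν.rowLen k := by
  by_contra! hk
  exact lt_irrefl _ (mem_iff_lt_rowLen.1 (h (mem_iff_lt_rowLen.2 hk)))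

theorem ext_of_rowLen (h : ∀ k, μ.rowLen k = ν.rowLen k) : μ = ν := by
  ext ⟨k, c⟩
  simp only [mem_cells, mem_iff_lt_rowLen, h]

theorem rowLen_eq_zero_of_rowLen_eq_zero {N k : ℕ} (hN : μ.rowLen N = 0) (hk : N ≤ k) :
    μ.rowLen k = 0 :=
  Nat.eq_zero_of_le_zero (hN ▸ μ.rowLen_anti N k hk)

theorem rowLen_eq_zero_of_le {k : ℕ} (h : μ ≤ ν) (hν : ν.rowLen k = 0) : μ.rowLen k = 0 :=
  Nat.eq_zero_of_le_zero (hν ▸ rowLen_mono h k)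

theorem lt_of_rowLen_pos {N k : ℕ} (hN : μ.rowLen N = 0) (hk : 0 < μ.rowLen k) : k < N := by
  by_contra! h
  exact hk.ne' (rowLen_eq_zero_of_rowLen_eq_zero hN h)

theorem rowLen_colLen_zero (μ : YoungDiagram) : μ.rowLen (μ.colLen 0) = 0 := by
  by_contra! h
  exact lt_irrefl _ (mem_iff_lt_colLen.1 (mem_iff_lt_rowLen.2 (Nat.pos_of_ne_zero h)))

def boundedBy (μ : YoungDiagram) (f : ℕ → ℕ) (hf : Antitone f) : YoungDiagram where
  cells := μ.cells.filter fun c => c.2 < f c.1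
  isLowerSet p q hqp hp := by
    simp only [coe_filter, Set.mem_ofPred_eq] at hp ⊢
    exact ⟨μ.isLowerSet hqp hp.1, hqp.2.trans_lt (hp.2.trans_le (hf hqp.1))⟩

theorem boundedBy_le {f : ℕ → ℕ} (hf : Antitone f) : μ.boundedBy f hf ≤ μ :=
  cells_subset_iff.1 (filter_subset _ _)

theorem rowLen_boundedBy {f : ℕ → ℕ} (hf : Antitone f) (k : ℕ) :
    (μ.boundedBy f hf).rowLen k = min (μ.rowLen k) (f k) :=
  eq_of_forall_lt_iff fun c => by
    rw [← mem_iff_lt_rowLen, lt_min_iff, ← mem_iff_lt_rowLen]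
    exact mem_filter

end YoungDiagram

open YoungDiagram

theorem mem_skewCells {μ lam : YoungDiagram} {k c : ℕ} :
    (k, c) ∈ skewCells μ lam ↔ μ.rowLen k ≤ c ∧ c < lam.rowLen k := by
  rw [skewCells, mem_sdiff, mem_cells, mem_cells, mem_iff_lt_rowLen, mem_iff_lt_rowLen, not_lt,
    and_comm]

theorem Adj.symm {c d : ℕ × ℕ} (h : Adj c d) : Adj d c := by
  unfold Adj at *
  omega

def AdjIn (s : Finset (ℕ × ℕ)) (x y : ℕ × ℕ) : Prop := x ∈ s ∧ y ∈ s ∧ Adj x y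

instance (s : Finset (ℕ × ℕ)) : Std.Symm (AdjIn s) :=
  ⟨fun _ _ ⟨hx, hy, h⟩ => ⟨hy, hx, h.symm⟩⟩

theorem reflTransGen_adjIn_row {s : Finset (ℕ × ℕ)} {k a b : ℕ} (hab : a ≤ b)
    (h : ∀ c, a ≤ c → c ≤ b → (k, c) ∈ s) : ReflTransGen (AdjIn s) (k, a) (k, b) := by
  induction b, hab using Nat.le_induction with
  | base => exact .refl
  | succ b hab ih =>
    exact (ih fun c h1 h2 => h c h1 (by omega)).tail
      ⟨h b hab (by omega), h (b + 1) (by omega) le_rfl, Or.inl ⟨rfl, Or.inr rfl⟩⟩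

theorem exists_vertical_of_reflTransGen_adjIn {s : Finset (ℕ × ℕ)} {c d : ℕ × ℕ}
    (h : ReflTransGen (AdjIn s) c d) :
    ∀ k, c.1 ≤ k → k < d.1 → ∃ col, (k, col) ∈ s ∧ (k + 1, col) ∈ s := by
  induction h with
  | refl => intro k h1 h2; omega
  | @tail b e _ hbe ih =>
    intro k hck hke
    by_cases hkb : k < b.1
    · exact ih k hck hkb
    obtain ⟨hb, he, hadj⟩ := hbe
    rcases hadj with ⟨hrow, -⟩ | ⟨hcol, hrow⟩
    · omega
    have hb1 : b.1 = k := by omega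
    have he1 : e.1 = k + 1 := by omega
    refine ⟨b.2, ?_, ?_⟩
    · rwa [← hb1]
    · rwa [← he1, hcol]

/-- `lam / μ` occupies exactly the rows `i, …, j`, and consecutive rows of it overlap in exactly
one column. -/
structure RimHookRows (μ lam : YoungDiagram) (i j : ℕ) : Prop where
  le : μ ≤ lam
  top_le_bottom : i ≤ j
  rowLen_lt_iff : ∀ k, μ.rowLen k < lam.rowLen k ↔ i ≤ k ∧ k ≤ j
  rowLen_add_one : ∀ k, i ≤ k → k < j → μ.rowLen k + 1 = lam.rowLen (k + 1)

theorem sum_Icc_tsub_telescope {a b : ℕ → ℕ} {i j : ℕ} (hij : i ≤ j) (hle : ∀ k, b k ≤ a k)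
    (hstep : ∀ k, i ≤ k → k < j → b k + 1 = a (k + 1)) :
    ∑ k ∈ Icc i j, (a k - b k) + b j + i = a i + j := by
  induction j, hij using Nat.le_induction with
  | base =>
    rw [Icc_self, sum_singleton]
    have := hle i
    omega
  | succ j hij ih =>
    rw [sum_Icc_succ_top (by omega)]
    have := ih fun k h1 h2 => hstep k h1 (by omega)
    have := hstep j hij (by omega)
    have := hle (j + 1)
    omega

namespace RimHookRows

variable {μ lam : YoungDiagram} {i j : ℕ}

theorem rowLen_eq (h : RimHookRows μ lam i j) {k : ℕ} (hk : k < i ∨ j < k) :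
    μ.rowLen k = lam.rowLen k := by
  have := rowLen_mono h.le k
  have := h.rowLen_lt_iff k
  omega

theorem mem_skewCells_rowLen (h : RimHookRows μ lam i j) {k : ℕ} (hik : i ≤ k)
    (hkj : k ≤ j) : (k, μ.rowLen k) ∈ skewCells μ lam :=
  mem_skewCells.2 ⟨le_rfl, (h.rowLen_lt_iff k).2 ⟨hik, hkj⟩⟩

theorem isConnectedCells (h : RimHookRows μ lam i j) : IsConnectedCells (skewCells μ lam) := by
  set s := skewCells μ lam
  have along_row : ∀ k c, (k, c) ∈ s → ReflTransGen (AdjIn s) (k, μ.rowLen k) (k, c) :=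
    fun k c hc => reflTransGen_adjIn_row (mem_skewCells.1 hc).1 fun c' h1 h2 =>
      mem_skewCells.2 ⟨h1, h2.trans_lt (mem_skewCells.1 hc).2⟩
  have row_starts : ∀ k, i ≤ k → k ≤ j →
      ReflTransGen (AdjIn s) (i, μ.rowLen i) (k, μ.rowLen k) := by
    intro k hik
    induction k, hik using Nat.le_induction with
    | base => exact fun _ => .refl
    | succ k hik ih =>
      intro hkj
      have hbelow : (k + 1, μ.rowLen k) ∈ s := by
        have := h.rowLen_add_one k hik (by omega)
        exact mem_skewCells.2 ⟨μ.rowLen_anti _ _ k.le_succ, by omega⟩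
      exact ((ih (by omega)).tail ⟨h.mem_skewCells_rowLen hik (by omega), hbelow,
        Or.inr ⟨rfl, Or.inr rfl⟩⟩).trans (symm_of _ (along_row _ _ hbelow))
  have reach : ∀ c ∈ s, ReflTransGen (AdjIn s) (i, μ.rowLen i) c := by
    rintro ⟨k, c⟩ hc
    have hk := (h.rowLen_lt_iff k).1 (by have := mem_skewCells.1 hc; omega)
    exact (row_starts k hk.1 hk.2).trans (along_row k c hc)
  exact fun c hc d hd => (symm_of _ (reach c hc)).trans (reach d hd)

theorem noSquare (h : RimHookRows μ lam i j) : NoSquare (skewCells μ lam) := by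
  rintro ⟨a, b, h1, h2, h3, h4⟩
  simp only [mem_skewCells] at h1 h2 h3 h4
  have ha := (h.rowLen_lt_iff a).1 (by omega)
  have := (h.rowLen_lt_iff (a + 1)).1 (by omega)
  have := h.rowLen_add_one a ha.1 (by omega)
  omega

theorem isRimHook (h : RimHookRows μ lam i j) : IsRimHook μ lam :=
  ⟨h.le, ⟨_, h.mem_skewCells_rowLen h.top_le_bottom le_rfl⟩, h.isConnectedCells, h.noSquare⟩

theorem skewSize_eq_sum (h : RimHookRows μ lam i j) :
    skewSize μ lam = ∑ k ∈ Icc i j, (lam.rowLen k - μ.rowLen k) := by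
  rw [skewSize, card_eq_sum_card_fiberwise (f := Prod.fst) (t := Icc i j)]
  · refine sum_congr rfl fun k _ => ?_
    have hfiber : (skewCells μ lam).filter (·.1 = k) =
        (Ico (μ.rowLen k) (lam.rowLen k)).image (Prod.mk k) := by
      ext ⟨a, c⟩
      simp only [mem_filter, mem_skewCells, mem_image, mem_Ico, Prod.mk.injEq]
      constructor
      · rintro ⟨hc, rfl⟩
        exact ⟨c, hc, rfl, rfl⟩
      · rintro ⟨c, hc, rfl, rfl⟩
        exact ⟨hc, rfl⟩
    rw [hfiber, card_image_of_injective _ (Prod.mk_right_injective k), Nat.card_Ico]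
  · rintro ⟨k, c⟩ hc
    simpa using (h.rowLen_lt_iff k).1 (by have := mem_skewCells.1 hc; omega)

theorem skewSize_add (h : RimHookRows μ lam i j) :
    skewSize μ lam + μ.rowLen j + i = lam.rowLen i + j := by
  rw [h.skewSize_eq_sum]
  exact sum_Icc_tsub_telescope h.top_le_bottom (rowLen_mono h.le) h.rowLen_add_one

end RimHookRows

theorem IsRimHook.exists_rimHookRows {μ lam : YoungDiagram} (h : IsRimHook μ lam) :
    ∃ i j, RimHookRows μ lam i j := by
  obtain ⟨hle, hne, hconn, hsq⟩ := h
  set s := skewCells μ lam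
  obtain ⟨⟨i, ci⟩, hi, hmin⟩ := s.exists_min_image Prod.fst hne
  obtain ⟨⟨j, cj⟩, hj, hmax⟩ := s.exists_max_image Prod.fst hne
  have crossing := exists_vertical_of_reflTransGen_adjIn (hconn _ hi _ hj)
  have hbetween : ∀ k, μ.rowLen k < lam.rowLen k → i ≤ k ∧ k ≤ j := fun k hk =>
    ⟨hmin _ (mem_skewCells.2 ⟨le_rfl, hk⟩), hmax _ (mem_skewCells.2 ⟨le_rfl, hk⟩)⟩
  refine ⟨i, j, hle, (hbetween j ((mem_skewCells.1 hj).1.trans_lt (mem_skewCells.1 hj).2)).1,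
    fun k => ⟨hbetween k, fun ⟨hik, hkj⟩ => ?_⟩, fun k hik hkj => ?_⟩
  · rcases hkj.lt_or_eq with hkj | rfl
    · obtain ⟨col, hcol, -⟩ := crossing k hik hkj
      have := mem_skewCells.1 hcol
      omega
    · have := mem_skewCells.1 hj
      omega
  · obtain ⟨col, hcol, hcol'⟩ := crossing k hik hkj
    have := mem_skewCells.1 hcol
    have := mem_skewCells.1 hcol'
    have := μ.rowLen_anti k (k + 1) k.le_succ
    have := lam.rowLen_anti k (k + 1) k.le_succ
    -- otherwise `(k, μ.rowLen k)`, `(k + 1, μ.rowLen k)` and their right neighbours form a square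
    by_contra hne
    refine hsq ⟨k, μ.rowLen k, ?_, ?_, ?_, ?_⟩ <;> rw [mem_skewCells] <;> omega

theorem exists_rimHookRows {lam : YoungDiagram} {i j m : ℕ} (hij : i ≤ j)
    (hm_ge : lam.rowLen (j + 1) ≤ m) (hm_lt : m < lam.rowLen j) :
    ∃ μ, RimHookRows μ lam i j ∧ μ.rowLen j = m := by
  let f : ℕ → ℕ := fun k =>
    if k < i ∨ j < k then lam.rowLen k else if k = j then m else lam.rowLen (k + 1) - 1
  have hf_le : ∀ k, f k ≤ lam.rowLen k := by
    intro k
    have := lam.rowLen_anti k (k + 1) k.le_succ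
    simp only [f]
    split_ifs <;> subst_vars <;> omega
  have hf : Antitone f := antitone_nat_of_succ_le fun k => by
    have := lam.rowLen_anti k (k + 1) k.le_succ
    have := lam.rowLen_anti (k + 1) (k + 1 + 1) (k + 1).le_succ
    simp only [f]
    split_ifs <;> subst_vars <;> omega
  have hrowLen : ∀ k, (lam.boundedBy f hf).rowLen k = f k := fun k => by
    rw [rowLen_boundedBy, min_eq_right (hf_le k)]
  have hm_lt' : ∀ k ≤ j, m < lam.rowLen k := fun k hk => hm_lt.trans_le (lam.rowLen_anti k j hk)
  refine ⟨lam.boundedBy f hf, ⟨boundedBy_le hf, hij, fun k => ?_, fun k hik hkj => ?_⟩, ?_⟩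
  · rw [hrowLen]
    rcases le_or_gt k j with hkj | hjk
    · have := hm_lt' k hkj
      have := lam.rowLen_anti k (k + 1) k.le_succ
      simp only [f]
      split_ifs <;> omega
    · simp only [f, if_pos (Or.inr hjk)]
      omega
  · have := hm_lt' (k + 1) hkj
    simp only [hrowLen, f, if_neg (show ¬(k < i ∨ j < k) by omega), if_neg hkj.ne]
    omega
  · simp only [hrowLen, f, if_neg (show ¬(j < i ∨ j < j) by omega), if_true]

/-- Only meaningful for `k < N`: beyond that `N - 1 - k` truncates to `0`. -/
def betaFn (N : ℕ) (μ : YoungDiagram) (k : ℕ) : ℕ := μ.rowLen k + (N - 1 - k)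

def betaSet (N : ℕ) (μ : YoungDiagram) : Finset ℕ := (range N).image (betaFn N μ)

section BetaSet

variable {N : ℕ} {μ ν : YoungDiagram}

theorem betaFn_strictAntiOn : StrictAntiOn (betaFn N μ) (Set.Iio N) := by
  intro a ha b hb hab
  have := μ.rowLen_anti a b hab.le
  simp only [Set.mem_Iio] at ha hb
  unfold betaFn
  omega

theorem mem_betaSet {x : ℕ} : x ∈ betaSet N μ ↔ ∃ k < N, betaFn N μ k = x := by
  simp [betaSet]

theorem card_betaSet : #(betaSet N μ) = N := by
  rw [betaSet, card_image_of_injOn (by simpa using betaFn_strictAntiOn.injOn), card_range]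

theorem card_filter_betaFn_lt {k : ℕ} (hk : k < N) :
    #((betaSet N μ).filter (betaFn N μ k < ·)) = k := by
  have hk' : k ∈ Set.Iio N := hk
  have : (betaSet N μ).filter (betaFn N μ k < ·) = (range k).image (betaFn N μ) := by
    ext x
    simp only [mem_filter, mem_betaSet, mem_image, mem_range]
    constructor
    · rintro ⟨⟨k', hk'N, rfl⟩, hlt⟩
      exact ⟨k', (betaFn_strictAntiOn.lt_iff_gt hk' hk'N).1 hlt, rfl⟩
    · rintro ⟨k', hk'k, rfl⟩
      exact ⟨⟨k', hk'k.trans hk, rfl⟩, betaFn_strictAntiOn (hk'k.trans hk) hk' hk'k⟩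
  rw [this, card_image_of_injOn, card_range]
  exact betaFn_strictAntiOn.injOn.mono fun k' hk'k => (mem_range.1 hk'k).trans hk

theorem eq_of_betaSet_eq (hμ : μ.rowLen N = 0) (hν : ν.rowLen N = 0)
    (h : betaSet N μ = betaSet N ν) : μ = ν := by
  refine ext_of_rowLen fun k => ?_
  rcases lt_or_ge k N with hk | hk
  · obtain ⟨k', hk', hkk'⟩ := mem_betaSet.1 (h ▸ mem_betaSet.2 ⟨k, hk, rfl⟩)
    -- both `k` and `k'` count the beta-numbers above `betaFn N μ k`
    obtain rfl : k' = k := by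
      rw [← card_filter_betaFn_lt (μ := ν) hk', hkk', ← h, card_filter_betaFn_lt hk]
    unfold betaFn at hkk'
    omega
  · rw [rowLen_eq_zero_of_rowLen_eq_zero hμ hk, rowLen_eq_zero_of_rowLen_eq_zero hν hk]

theorem notMem_betaSet {x j : ℕ} (hj : j < N) (hlt : x < betaFn N μ j)
    (hgt : j + 1 < N → betaFn N μ (j + 1) < x) : x ∉ betaSet N μ := by
  rw [mem_betaSet]
  rintro ⟨k, hk, rfl⟩
  rcases le_or_gt k j with hkj | hjk
  · exact (betaFn_strictAntiOn.antitoneOn hk hj hkj).not_gt hlt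
  · exact (betaFn_strictAntiOn.antitoneOn (show j + 1 < N by omega) hk hjk).not_gt
      (hgt (by omega))

end BetaSet

namespace RimHookRows

variable {N i j : ℕ} {μ lam : YoungDiagram}

theorem lt_of_rowLen_eq_zero (h : RimHookRows μ lam i j) (hN : lam.rowLen N = 0) : j < N :=
  lt_of_rowLen_pos hN (Nat.zero_lt_of_lt ((h.rowLen_lt_iff j).2 ⟨h.top_le_bottom, le_rfl⟩))

theorem betaFn_eq_add_skewSize (h : RimHookRows μ lam i j) (hN : lam.rowLen N = 0) :
    betaFn N lam i = betaFn N μ j + skewSize μ lam := by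
  have := h.skewSize_add
  have := h.lt_of_rowLen_eq_zero hN
  have := h.top_le_bottom
  unfold betaFn
  omega

theorem betaFn_notMem_betaSet (h : RimHookRows μ lam i j) (hN : lam.rowLen N = 0) :
    betaFn N μ j ∉ betaSet N lam := by
  have hj := h.lt_of_rowLen_eq_zero hN
  refine notMem_betaSet hj ?_ fun _ => ?_
  · have := (h.rowLen_lt_iff j).2 ⟨h.top_le_bottom, le_rfl⟩
    unfold betaFn
    omega
  · have := h.rowLen_eq (k := j + 1) (by omega)
    have := μ.rowLen_anti j (j + 1) j.le_succ
    unfold betaFn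
    omega

theorem betaSet_eq (h : RimHookRows μ lam i j) (hN : lam.rowLen N = 0) :
    betaSet N μ = insert (betaFn N μ j) ((betaSet N lam).erase (betaFn N lam i)) := by
  have hj := h.lt_of_rowLen_eq_zero hN
  have hij := h.top_le_bottom
  have hi : i < N := hij.trans_lt hj
  have hout := h.betaFn_notMem_betaSet hN
  refine eq_of_subset_of_card_le (fun x hx => ?_) ?_
  · obtain ⟨k, hk, rfl⟩ := mem_betaSet.1 hx
    rw [mem_insert, mem_erase]
    rcases eq_or_ne k j with rfl | hkj
    · exact Or.inl rfl
    obtain ⟨k', hk'N, hk'i, hk'⟩ : ∃ k' < N, k' ≠ i ∧ betaFn N lam k' = betaFn N μ k := by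
      by_cases hk_out : k < i ∨ j < k
      · exact ⟨k, hk, by omega, by rw [betaFn, betaFn, h.rowLen_eq hk_out]⟩
      · have := h.rowLen_add_one k (by omega) (by omega)
        exact ⟨k + 1, by omega, by omega, by unfold betaFn; omega⟩
    exact Or.inr ⟨fun he => hk'i (betaFn_strictAntiOn.injOn hk'N hi (hk'.trans he)),
      mem_betaSet.2 ⟨k', hk'N, hk'⟩⟩
  · rw [card_insert_of_notMem (fun hx => hout (mem_of_mem_erase hx)),
      card_erase_of_mem (mem_betaSet.2 ⟨i, hi, rfl⟩), card_betaSet, card_betaSet]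
    omega

end RimHookRows

def resCount (n r : ℕ) (s : Finset ℕ) : ℕ := #(s.filter (· % n = r))

/-- On the `n`-runner abacus, every bead of `s` sits as high on its runner as it can. -/
def IsFlush (n : ℕ) (s : Finset ℕ) : Prop := ∀ b ∈ s, n ≤ b → b - n ∈ s

theorem resCount_insert_erase {n r b c : ℕ} {s : Finset ℕ} (hb : b ∈ s) (hc : c ∉ s)
    (hmod : c % n = b % n) : resCount n r (insert c (s.erase b)) = resCount n r s := by
  unfold resCount
  rw [filter_insert, filter_erase]
  by_cases hr : b % n = r
  · rw [if_pos (hmod.trans hr),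
      card_insert_of_notMem fun h => hc (mem_filter.1 (mem_of_mem_erase h)).1,
      card_erase_add_one (mem_filter.2 ⟨hb, hr⟩)]
  · rw [if_neg (hmod ▸ hr), erase_eq_of_notMem]
    exact fun h => hr (mem_filter.1 h).2

namespace IsFlush

variable {n : ℕ} {s t : Finset ℕ}

theorem sub_mul_mem (hs : IsFlush n s) {b : ℕ} (hb : b ∈ s) :
    ∀ q, n * q ≤ b → b - n * q ∈ s
  | 0, _ => by simpa
  | q + 1, hq => by
    rw [Nat.mul_succ] at hq ⊢
    rw [← Nat.sub_sub]
    exact hs _ (hs.sub_mul_mem hb q (by omega)) (by omega)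

theorem mem_iff (hn : 0 < n) (hs : IsFlush n s) {x : ℕ} :
    x ∈ s ↔ x / n < resCount n (x % n) s := by
  constructor
  · intro hx
    have hmul : ∀ q ∈ range (x / n + 1), n * q ≤ x := fun q hq =>
      (Nat.mul_le_mul_left n (Nat.lt_succ_iff.1 (mem_range.1 hq))).trans (Nat.mul_div_le x n)
    have hsub : (range (x / n + 1)).image (x - n * ·) ⊆ s.filter (· % n = x % n) := by
      intro y hy
      obtain ⟨q, hq, rfl⟩ := mem_image.1 hy
      exact mem_filter.2 ⟨hs.sub_mul_mem hx q (hmul q hq), Nat.sub_mul_mod (hmul q hq)⟩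
    have hinj : Set.InjOn (x - n * ·) (range (x / n + 1)) := fun q hq q' hq' hqq' => by
      have := hmul q hq
      have := hmul q' hq'
      exact Nat.eq_of_mul_eq_mul_left hn (by simp only at hqq'; omega)
    calc x / n < #(range (x / n + 1)) := by rw [card_range]; exact lt_add_one _
      _ = #((range (x / n + 1)).image (x - n * ·)) := (card_image_of_injOn hinj).symm
      _ ≤ resCount n (x % n) s := card_le_card hsub
  · intro hlt
    by_contra hx
    suffices resCount n (x % n) s ≤ #(range (x / n)) by rw [card_range] at this; omega
    refine card_le_card_of_injOn (· / n) (fun y hy => ?_) (fun y hy y' hy' hyy' => ?_)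
    · obtain ⟨hys, hymod⟩ := mem_filter.1 hy
      rw [coe_range, Set.mem_Iio]
      by_contra! hge
      -- otherwise `x` is reached from `y ≥ x` by subtracting a multiple of `n`
      have := Nat.div_add_mod y n
      have := Nat.div_add_mod x n
      have := Nat.mul_sub n (y / n) (x / n)
      have := Nat.mul_le_mul_left n hge
      exact hx (by convert hs.sub_mul_mem hys (y / n - x / n) (by omega) using 1; omega)
    · have hymod := (mem_filter.1 hy).2
      have hy'mod := (mem_filter.1 hy').2
      simp only at hyy'
      rw [← Nat.div_add_mod y n, ← Nat.div_add_mod y' n, hyy', hymod, hy'mod]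

theorem eq_of_resCount_eq (hn : 0 < n) (hs : IsFlush n s) (ht : IsFlush n t)
    (h : ∀ r, resCount n r s = resCount n r t) : s = t := by
  ext x
  rw [hs.mem_iff hn, ht.mem_iff hn, h]

end IsFlush

section RemoveStep

variable {n N : ℕ} {lam μ ν : YoungDiagram}

theorem RemoveStep.resCount_betaSet (h : RemoveStep n lam μ) (hN : lam.rowLen N = 0) (r : ℕ) :
    resCount n r (betaSet N μ) = resCount n r (betaSet N lam) := by
  obtain ⟨i, j, hrows⟩ := h.1.exists_rimHookRows
  have hi : i < N := hrows.top_le_bottom.trans_lt (hrows.lt_of_rowLen_eq_zero hN)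
  rw [hrows.betaSet_eq hN]
  refine resCount_insert_erase (mem_betaSet.2 ⟨i, hi, rfl⟩) (hrows.betaFn_notMem_betaSet hN) ?_
  rw [hrows.betaFn_eq_add_skewSize hN, h.2, Nat.add_mod_right]

theorem le_of_reflTransGen_removeStep (h : ReflTransGen (RemoveStep n) lam ν) : ν ≤ lam := by
  induction h with
  | refl => exact le_rfl
  | tail _ hstep ih => exact hstep.1.1.trans ih

theorem resCount_betaSet_of_reflTransGen (hN : lam.rowLen N = 0)
    (h : ReflTransGen (RemoveStep n) lam ν) (r : ℕ) :
    resCount n r (betaSet N ν) = resCount n r (betaSet N lam) := by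
  induction h with
  | refl => rfl
  | tail hreach hstep ih =>
    rw [hstep.resCount_betaSet (rowLen_eq_zero_of_le (le_of_reflTransGen_removeStep hreach) hN),
      ih]

theorem isFlush_betaSet_of_not_exists_removeStep (hN : lam.rowLen N = 0)
    (hcore : ¬∃ μ, RemoveStep n lam μ) : IsFlush n (betaSet N lam) := by
  intro b hb hnb
  by_contra hout
  obtain ⟨i, hi, hib⟩ := mem_betaSet.1 hb
  have hn : 0 < n := Nat.pos_of_ne_zero fun h0 => hout (by simpa [h0] using hb)
  -- the rim hook runs from row `i` down to the last row `j` whose beta-number exceeds `b - n`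
  set J := (range N).filter (b - n < betaFn N lam ·)
  have hiJ : i ∈ J := mem_filter.2 ⟨mem_range.2 hi, by omega⟩
  obtain ⟨j, hjJ, hjmax⟩ := J.exists_max_image id ⟨i, hiJ⟩
  obtain ⟨hjN, hjβ⟩ := mem_filter.1 hjJ
  rw [mem_range] at hjN
  have hij : i ≤ j := hjmax i hiJ
  have hbelow : j + 1 < N → betaFn N lam (j + 1) < b - n := fun h =>
    lt_of_le_of_ne (not_lt.1 fun hlt => (hjmax _ (mem_filter.2 ⟨mem_range.2 h, hlt⟩)).not_gt
      j.lt_succ_self) fun he => hout (he ▸ mem_betaSet.2 ⟨j + 1, h, rfl⟩)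
  obtain ⟨hshift, hm_ge⟩ : N - 1 - j ≤ b - n ∧ lam.rowLen (j + 1) ≤ b - n - (N - 1 - j) := by
    rcases lt_or_ge (j + 1) N with h | h
    · have := hbelow h
      unfold betaFn at this
      omega
    · rw [rowLen_eq_zero_of_rowLen_eq_zero hN h]
      omega
  have hm_lt : b - n - (N - 1 - j) < lam.rowLen j := by
    unfold betaFn at hjβ
    omega
  obtain ⟨μ, hμ, hμj⟩ := exists_rimHookRows hij hm_ge hm_lt
  refine hcore ⟨μ, hμ.isRimHook, ?_⟩
  have := hμ.skewSize_add
  unfold betaFn at hib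
  omega

end RemoveStep

/-- the `n`-core of a partition is well defined: any two maximal
sequences of removals of rim hooks of size `n` terminate at the same partition. -/
theorem n_core_well_defined (n : ℕ) (hn : 0 < n) (lam nu₁ nu₂ : YoungDiagram)
    (h1 : Relation.ReflTransGen (RemoveStep n) lam nu₁)
    (h2 : Relation.ReflTransGen (RemoveStep n) lam nu₂)
    (c1 : ¬∃ mu, RemoveStep n nu₁ mu) (c2 : ¬∃ mu, RemoveStep n nu₂ mu) :
    nu₁ = nu₂ := by
  have hN := lam.rowLen_colLen_zero
  have hN₁ := rowLen_eq_zero_of_le (le_of_reflTransGen_removeStep h1) hN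
  have hN₂ := rowLen_eq_zero_of_le (le_of_reflTransGen_removeStep h2) hN
  refine eq_of_betaSet_eq hN₁ hN₂ (IsFlush.eq_of_resCount_eq hn
    (isFlush_betaSet_of_not_exists_removeStep hN₁ c1)
    (isFlush_betaSet_of_not_exists_removeStep hN₂ c2) fun r => ?_)
  rw [resCount_betaSet_of_reflTransGen hN h1, resCount_betaSet_of_reflTransGen hN h2]
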